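/- Let 0 < ℓ ≤ L, K ≥ 0 and d ≥ 1. The function α ↦ (φ(α,L)·K + α·√(2dL)) / (1 − φ(α,L)), defined on the interval [1/(ℓ+L), 1/L), attains its minimum over this interval at α = 1/(ℓ+L), and its value there equals (K·√(ℓ² + L²) + √(2dL)) / (ℓ + L − √(ℓ² + L²)). -/
import Mathlib


open Set

/-- The function `α ↦ (φ(α,L)·K + α·√(2dL)) / (1 − φ(α,L))`, with
`φ(α,L) = √(1 − 2Lα + 2L²α²)`, attains its minimum over the interval
`[1/(ℓ+L), 1/L)` at `α = 1/(ℓ+L)`, where its value equals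
`(K·√(ℓ² + L²) + √(2dL)) / (ℓ + L − √(ℓ² + L²))`. -/
theorem limsup_bound_minimized_at_inv_ell_add_L
    (ℓ L K : ℝ) (d : ℕ) (hℓ : 0 < ℓ) (hℓL : ℓ ≤ L) (hK : 0 ≤ K) (hd : 1 ≤ d) :
    (∀ α ∈ Ico (1 / (ℓ + L)) (1 / L),
      (Real.sqrt (1 - 2 * L * (1 / (ℓ + L)) + 2 * L ^ 2 * (1 / (ℓ + L)) ^ 2) * K +
          (1 / (ℓ + L)) * Real.sqrt (2 * d * L)) /
        (1 - Real.sqrt (1 - 2 * L * (1 / (ℓ + L)) + 2 * L ^ 2 * (1 / (ℓ + L)) ^ 2)) ≤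
      (Real.sqrt (1 - 2 * L * α + 2 * L ^ 2 * α ^ 2) * K + α * Real.sqrt (2 * d * L)) /
        (1 - Real.sqrt (1 - 2 * L * α + 2 * L ^ 2 * α ^ 2))) ∧
    (Real.sqrt (1 - 2 * L * (1 / (ℓ + L)) + 2 * L ^ 2 * (1 / (ℓ + L)) ^ 2) * K +
        (1 / (ℓ + L)) * Real.sqrt (2 * d * L)) /
      (1 - Real.sqrt (1 - 2 * L * (1 / (ℓ + L)) + 2 * L ^ 2 * (1 / (ℓ + L)) ^ 2)) =
      (K * Real.sqrt (ℓ ^ 2 + L ^ 2) + Real.sqrt (2 * d * L)) /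
        (ℓ + L - Real.sqrt (ℓ ^ 2 + L ^ 2)) := by
  have hL : 0 < L := lt_of_lt_of_le hℓ hℓL
  have hp : 0 < ℓ + L := by linarith
  have hcnn : 0 ≤ Real.sqrt (2 * d * L) := Real.sqrt_nonneg _
  -- value of the quadratic at α₀
  have hg0 : 1 - 2 * L * (1 / (ℓ + L)) + 2 * L ^ 2 * (1 / (ℓ + L)) ^ 2
      = (ℓ ^ 2 + L ^ 2) / (ℓ + L) ^ 2 := by
    field_simp
    ring
  have hφ0 : Real.sqrt (1 - 2 * L * (1 / (ℓ + L)) + 2 * L ^ 2 * (1 / (ℓ + L)) ^ 2)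
      = Real.sqrt (ℓ ^ 2 + L ^ 2) / (ℓ + L) := by
    rw [hg0, Real.sqrt_div (by positivity), Real.sqrt_sq hp.le]
  have hs : Real.sqrt (ℓ ^ 2 + L ^ 2) < ℓ + L := by
    have : Real.sqrt (ℓ ^ 2 + L ^ 2) < Real.sqrt ((ℓ + L) ^ 2) := by
      apply Real.sqrt_lt_sqrt (by positivity)
      nlinarith
    rwa [Real.sqrt_sq hp.le] at this
  have hsnn : 0 ≤ Real.sqrt (ℓ ^ 2 + L ^ 2) := Real.sqrt_nonneg _
  have hden0 : 0 < 1 - Real.sqrt (1 - 2 * L * (1 / (ℓ + L)) + 2 * L ^ 2 * (1 / (ℓ + L)) ^ 2) := by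
    rw [hφ0, sub_pos, div_lt_one hp]
    exact hs
  constructor
  · intro α hα
    obtain ⟨hα1, hα2⟩ := hα
    have hαpos : 0 < α := lt_of_lt_of_le (by positivity) hα1
    have hαL : L * α < 1 := by
      rw [lt_div_iff₀ hL] at hα2; linarith [hα2]
    -- monotonicity of the quadratic
    have hα0 : 1 / (ℓ + L) ≤ α := hα1
    have hq : 1 - 2 * L * (1 / (ℓ + L)) + 2 * L ^ 2 * (1 / (ℓ + L)) ^ 2
        ≤ 1 - 2 * L * α + 2 * L ^ 2 * α ^ 2 := by
      have h2 : (1 : ℝ) ≤ 2 * L / (ℓ + L) := by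
        rw [le_div_iff₀ hp]; linarith
      have h3 : (0 : ℝ) ≤ L * (α + 1 / (ℓ + L)) - 1 := by
        have h5 : L * (2 * (1 / (ℓ + L))) ≤ L * (α + 1 / (ℓ + L)) :=
          mul_le_mul_of_nonneg_left (by linarith) hL.le
        have h6 : L * (2 * (1 / (ℓ + L))) = 2 * L / (ℓ + L) := by ring
        rw [h6] at h5
        linarith
      nlinarith [mul_nonneg (mul_nonneg hL.le (sub_nonneg.2 hα0)) h3]
    have hφle : Real.sqrt (1 - 2 * L * (1 / (ℓ + L)) + 2 * L ^ 2 * (1 / (ℓ + L)) ^ 2)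
        ≤ Real.sqrt (1 - 2 * L * α + 2 * L ^ 2 * α ^ 2) := Real.sqrt_le_sqrt hq
    have hφlt1 : Real.sqrt (1 - 2 * L * α + 2 * L ^ 2 * α ^ 2) < 1 := by
      have h4 : Real.sqrt (1 - 2 * L * α + 2 * L ^ 2 * α ^ 2) < Real.sqrt 1 := by
        apply Real.sqrt_lt_sqrt (by nlinarith [sq_nonneg (1 - L * α)])
        nlinarith [mul_pos hL hαpos]
      simpa [Real.sqrt_one] using h4
    apply div_le_div₀
    · have := Real.sqrt_nonneg (1 - 2 * L * α + 2 * L ^ 2 * α ^ 2)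
      positivity
    · exact add_le_add (mul_le_mul_of_nonneg_right hφle hK)
        (mul_le_mul_of_nonneg_right hα0 hcnn)
    · linarith
    · linarith
  · rw [hφ0]
    have h1 : (1 : ℝ) - Real.sqrt (ℓ ^ 2 + L ^ 2) / (ℓ + L)
        = (ℓ + L - Real.sqrt (ℓ ^ 2 + L ^ 2)) / (ℓ + L) := by
      field_simp
    rw [h1]
    have hnum : Real.sqrt (ℓ ^ 2 + L ^ 2) / (ℓ + L) * K + 1 / (ℓ + L) * Real.sqrt (2 * d * L)
        = (K * Real.sqrt (ℓ ^ 2 + L ^ 2) + Real.sqrt (2 * d * L)) / (ℓ + L) := by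
      ring
    rw [hnum]
    rw [div_div_div_cancel_right₀]
    exact hp.ne'
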